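/- Let A ⊆ C̃, let u = [(u_ε)_ε] ∈ G̃(A), and let γ = [(γ_ε)_ε] be a path in A. Then ∫_γ u(z)dz := [(∫_{γ_ε} u_ε(z)dz)_ε] ∈ C̃ is well-defined, i.e., independent of the chosen representatives of u and of γ. Moreover, if γ and γ̃ are paths in A such that γ(t̃) = γ̃(t̃) for every t̃ ∈ [0,1]~, then ∫_γ u(z)dz = ∫_{γ̃} u(z)dz. -/

import Mathlib

open Real Set Metric MeasureTheory Filter

noncomputable section

/-- `P ε` holds for all sufficiently small `ε ∈ (0,1)`. -/
def EvSmall (P : ℝ → Prop) : Prop :=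
  ∃ ε₀ : ℝ, 0 < ε₀ ∧ ε₀ < 1 ∧ ∀ ε : ℝ, 0 < ε → ε ≤ ε₀ → P ε

/-- A net `(u_ε)` with values in a seminormed group is moderate. -/
def Moderate {E : Type*} [SeminormedAddGroup E] (u : ℝ → E) : Prop :=
  ∃ N : ℕ, EvSmall fun ε => ‖u ε‖ ≤ ε ^ (-(N : ℝ))

/-- A net `(u_ε)` is negligible. -/
def Negligible {E : Type*} [SeminormedAddGroup E] (u : ℝ → E) : Prop :=
  ∀ m : ℕ, EvSmall fun ε => ‖u ε‖ ≤ ε ^ (m : ℝ)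

/-- Two nets represent the same generalized point. -/
def EqvNet {E : Type*} [SeminormedAddGroup E] (x y : ℝ → E) : Prop :=
  Negligible fun ε => x ε - y ε

/-- The set of generalized points of `Ẽ` (modelled as the moderate nets). -/
def GenPt (E : Type*) [SeminormedAddGroup E] : Set (ℝ → E) := {x | Moderate x}

/-- `x` is a representative of some generalized point belonging to `A`. -/
def IsReprOfPointOf {E : Type*} [SeminormedAddGroup E] (A : Set (ℝ → E)) (x : ℝ → E) : Prop :=
  Moderate x ∧ ∃ a ∈ A, EqvNet x a

/-- The sharp norm `e^{-v(x)}` of a (moderate) net. -/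
noncomputable def sharpNorm {E : Type*} [SeminormedAddGroup E] (x : ℝ → E) : ℝ :=
  sInf {r : ℝ | ∃ b : ℝ, r = Real.exp (-b) ∧ EvSmall fun ε => ‖x ε‖ ≤ ε ^ b}

/-- `A` is open for the sharp topology (as a set of generalized points). -/
def SharpOpen {E : Type*} [SeminormedAddGroup E] (A : Set (ℝ → E)) : Prop :=
  (∀ x ∈ A, Moderate x) ∧
  ∀ x ∈ A, ∃ r > 0, ∀ y : ℝ → E, Moderate y →
    sharpNorm (fun ε => y ε - x ε) < r → y ∈ A

/-- `B` is a sharp neighbourhood of `A`. -/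
def IsSharpNbhdOf {E : Type*} [SeminormedAddGroup E] (B A : Set (ℝ → E)) : Prop :=
  A ⊆ B ∧ ∀ x ∈ A, ∃ r > 0, ∀ y : ℝ → E, Moderate y →
    sharpNorm (fun ε => y ε - x ε) < r → y ∈ B

/-- The internal set with representative `(Aε)`. -/
def InternalSet {E : Type*} [SeminormedAddGroup E] (Aε : ℝ → Set E) : Set (ℝ → E) :=
  {x | Moderate x ∧ ∃ y : ℝ → E, EqvNet x y ∧ EvSmall fun ε => y ε ∈ Aε ε}

/-- `(Aε)` is a sharply bounded representative. -/
def SharplyBddRep {E : Type*} [SeminormedAddGroup E] (Aε : ℝ → Set E) : Prop :=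
  ∃ M : ℕ, EvSmall fun ε => ∀ x ∈ Aε ε, ‖x‖ ≤ ε ^ (-(M : ℝ))

/-- A set of generalized points is sharply bounded. -/
def SharplyBddSet {E : Type*} [SeminormedAddGroup E] (A : Set (ℝ → E)) : Prop :=
  ∃ C : ℝ, ∀ x ∈ A, sharpNorm x ≤ C

/-- The interleaved closure of a set of generalized points. -/
def interleaved {E : Type*} [SeminormedAddGroup E] (A : Set (ℝ → E)) : Set (ℝ → E) :=
  {x | ∃ (m : ℕ) (S : Fin m → Set ℝ) (y : Fin m → ℝ → E),
    (∀ ε ∈ Set.Ioo (0:ℝ) 1, ∃! j, ε ∈ S j) ∧ (∀ j, y j ∈ A) ∧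
    ∀ ε ∈ Set.Ioo (0:ℝ) 1, ∀ j, ε ∈ S j → x ε = y j ε}

/-- A net of smooth functions (smooth for each ε ∈ (0,1)). -/
def SmoothNet {V : Type*} [NormedAddCommGroup V] [NormedSpace ℝ V] (u : ℝ → V → ℂ) : Prop :=
  ∀ ε : ℝ, 0 < ε → ε < 1 → ContDiff ℝ (⊤ : ℕ∞) (u ε)

/-- The nets belonging to `E_M(A)` : all derivatives are moderate along the points of `A`. -/
def EMod {V : Type*} [NormedAddCommGroup V] [NormedSpace ℝ V]
    (A : Set (ℝ → V)) (u : ℝ → V → ℂ) : Prop :=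
  SmoothNet u ∧ ∀ (n : ℕ) (x : ℝ → V), IsReprOfPointOf A x →
    Moderate fun ε => iteratedFDeriv ℝ n (u ε) (x ε)

/-- The nets belonging to `N(A)` : all derivatives are negligible along the points of `A`. -/
def NNeg {V : Type*} [NormedAddCommGroup V] [NormedSpace ℝ V]
    (A : Set (ℝ → V)) (u : ℝ → V → ℂ) : Prop :=
  SmoothNet u ∧ ∀ (n : ℕ) (x : ℝ → V), IsReprOfPointOf A x →
    Negligible fun ε => iteratedFDeriv ℝ n (u ε) (x ε)

/-- `u` and `v` define the same element of `G̃(A)`. -/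
def GEq {V : Type*} [NormedAddCommGroup V] [NormedSpace ℝ V]
    (A : Set (ℝ → V)) (u v : ℝ → V → ℂ) : Prop :=
  NNeg A fun ε z => u ε z - v ε z

/-- `x̃ ≤ ỹ` in `R̃` (for the given representatives). -/
def RleNet (x y : ℝ → ℝ) : Prop := ∀ m : ℕ, EvSmall fun ε => x ε ≤ y ε + ε ^ (m : ℝ)

/-- `x̃ ≫ 0` in `R̃`. -/
def StrPosNet (x : ℝ → ℝ) : Prop := ∃ m : ℕ, EvSmall fun ε => ε ^ (m : ℝ) ≤ x ε

/-- `x̃ ≪ ỹ` in `R̃`. -/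
def RltlNet (x y : ℝ → ℝ) : Prop := StrPosNet fun ε => y ε - x ε

/-- The operator `∂̄ = ½(∂ₓ + i ∂_y)` on smooth functions `ℂ → ℂ`. -/
def dbar (u : ℂ → ℂ) (z : ℂ) : ℂ :=
  (fderiv ℝ u z 1 + Complex.I * fderiv ℝ u z Complex.I) / 2

/-- The iterated derivative `D^k u = ∂ₓ^k u`. -/
def Dpow : ℕ → (ℂ → ℂ) → ℂ → ℂ
  | 0, u => u
  | (k+1), u => Dpow k fun z => fderiv ℝ u z 1

/-- `u ∈ G̃_H(A)` : generalized holomorphic functions on `A ⊆ C̃`. -/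
def GHol (A : Set (ℝ → ℂ)) (u : ℝ → ℂ → ℂ) : Prop :=
  EMod A u ∧ NNeg A fun ε => dbar (u ε)

/-- A continuous, piecewise `C¹` function on `[0,1]` (with its partition). -/
structure PwC1Path where
  toFun : ℝ → ℂ
  n : ℕ
  pt : Fin (n + 1) → ℝ
  mono : Monotone pt
  first : pt 0 = 0
  last : pt (Fin.last n) = 1
  cont : ContinuousOn toFun (Set.Icc 0 1)
  piece : ∀ i : Fin n, ContDiffOn ℝ 1 toFun (Set.Icc (pt i.castSucc) (pt i.succ))

/-- A net of piecewise `C¹` paths which is moderate for the `C¹_pw` norm. -/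
def PathModerate (γ : ℝ → PwC1Path) : Prop :=
  (∃ N : ℕ, EvSmall fun ε => ∀ t ∈ Set.Icc (0:ℝ) 1, ‖(γ ε).toFun t‖ ≤ ε ^ (-(N:ℝ))) ∧
  (∃ N : ℕ, EvSmall fun ε => ∀ᵐ t ∂(volume.restrict (Set.Icc (0:ℝ) 1)),
      ‖deriv (γ ε).toFun t‖ ≤ ε ^ (-(N:ℝ)))

/-- Two nets of paths represent the same generalized path
(their difference is negligible for the `C¹_pw` norm). -/
def PathEqv (γ γ' : ℝ → PwC1Path) : Prop :=
  ∀ m : ℕ, EvSmall fun ε =>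
    (∀ t ∈ Set.Icc (0:ℝ) 1, ‖(γ ε).toFun t - (γ' ε).toFun t‖ ≤ ε ^ (m:ℝ)) ∧
    (∀ᵐ t ∂(volume.restrict (Set.Icc (0:ℝ) 1)),
      ‖deriv (γ ε).toFun t - deriv (γ' ε).toFun t‖ ≤ ε ^ (m:ℝ))

/-- `γ` is a (generalized) path in `A ⊆ C̃`. -/
def PathIn (A : Set (ℝ → ℂ)) (γ : ℝ → PwC1Path) : Prop :=
  PathModerate γ ∧ ∀ t : ℝ → ℝ, (∀ ε, t ε ∈ Set.Icc (0:ℝ) 1) →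
    IsReprOfPointOf A fun ε => (γ ε).toFun (t ε)

/-- The complex path integral `∫_γ u(z) dz` along a piecewise `C¹` path. -/
noncomputable def pathIntegral (γ : PwC1Path) (u : ℂ → ℂ) : ℂ :=
  ∑ i : Fin γ.n, ∫ t in (γ.pt i.castSucc)..(γ.pt i.succ),
    u (γ.toFun t) * derivWithin γ.toFun (Set.Icc (γ.pt i.castSucc) (γ.pt i.succ)) t

/-- The path is closed: `γ(0) = γ(1)` as generalized points. -/
def ClosedPath (γ : ℝ → PwC1Path) : Prop :=
  Negligible fun ε => (γ ε).toFun 1 - (γ ε).toFun 0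

/-- A continuous, piecewise `C¹` function on `[0,1]²` (with its grid partition). -/
structure PwC1Homotopy where
  toFun : ℝ × ℝ → ℂ
  n : ℕ
  pt : Fin (n + 1) → ℝ
  mono : Monotone pt
  first : pt 0 = 0
  last : pt (Fin.last n) = 1
  cont : ContinuousOn toFun (Set.Icc 0 1 ×ˢ Set.Icc 0 1)
  piece : ∀ i j : Fin n, ContDiffOn ℝ 1 toFun
    (Set.Icc (pt i.castSucc) (pt i.succ) ×ˢ Set.Icc (pt j.castSucc) (pt j.succ))

/-- A moderate net of piecewise `C¹` functions on the square. -/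
def HomotopyModerate (H : ℝ → PwC1Homotopy) : Prop :=
  (∃ N : ℕ, EvSmall fun ε => ∀ p ∈ (Set.Icc (0:ℝ) 1 ×ˢ Set.Icc (0:ℝ) 1),
      ‖(H ε).toFun p‖ ≤ ε ^ (-(N:ℝ))) ∧
  (∃ N : ℕ, EvSmall fun ε =>
      ∀ᵐ p ∂(volume.restrict ((Set.Icc (0:ℝ) 1 ×ˢ Set.Icc (0:ℝ) 1) : Set (ℝ × ℝ))),
      ‖fderiv ℝ (H ε).toFun p‖ ≤ ε ^ (-(N:ℝ)))

/-- `H` is a homotopy in `A` between the closed paths `γ` and `γ'`. -/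
def IsHomotopyBetween (A : Set (ℝ → ℂ)) (γ γ' : ℝ → PwC1Path)
    (H : ℝ → PwC1Homotopy) : Prop :=
  HomotopyModerate H ∧
  (∀ t : ℝ → ℝ, (∀ ε, t ε ∈ Set.Icc (0:ℝ) 1) →
    (Negligible fun ε => (H ε).toFun (t ε, 0) - (γ ε).toFun (t ε)) ∧
    (Negligible fun ε => (H ε).toFun (t ε, 1) - (γ' ε).toFun (t ε))) ∧
  (∀ s : ℝ → ℝ, (∀ ε, s ε ∈ Set.Icc (0:ℝ) 1) →
    Negligible fun ε => (H ε).toFun (0, s ε) - (H ε).toFun (1, s ε)) ∧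
  (∀ t s : ℝ → ℝ, (∀ ε, t ε ∈ Set.Icc (0:ℝ) 1) → (∀ ε, s ε ∈ Set.Icc (0:ℝ) 1) →
    IsReprOfPointOf A fun ε => (H ε).toFun (t ε, s ε))


/-!
Everything rests on uniform estimates along the path: if a net of functions `F ε`, evaluated
along every net of points of a set `S`, is moderate (resp. negligible), then so is
`sup_{a ∈ S} ‖F ε a‖`. For negligibility one picks, at each `ε`, a point where the bound fails;
for moderateness the choice has to be diagonal in the exponent as well.

With `S = [0,1]`, `sup_t ‖u_ε (γ_ε t)‖ · ‖γ_ε'‖_∞` bounds the integral, giving moderateness and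
independence of the representative of `u`. For two paths with the same point values, integrating
by parts against `u_ε (γ'_ε t) * (γ_ε t - γ'_ε t)` leaves only terms containing
`u_ε ∘ γ_ε - u_ε ∘ γ'_ε` or `γ_ε - γ'_ε`, both uniformly negligible (the former by the mean value
theorem on segments whose points again represent points of `A`), multiplied by moderate
quantities; the derivatives of the paths enter only through their moderate bounds.
-/

open Topology

theorem EvSmall.eventually {P : ℝ → Prop} (h : EvSmall P) : ∀ᶠ ε in 𝓝[>] (0:ℝ), P ε := by
  obtain ⟨ε₀, hε₀, -, hP⟩ := h
  filter_upwards [Ioc_mem_nhdsGT hε₀] with ε hε using hP ε hε.1 hε.2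

theorem Filter.Eventually.evSmall {P : ℝ → Prop} (h : ∀ᶠ ε in 𝓝[>] (0:ℝ), P ε) : EvSmall P := by
  obtain ⟨ε₀, hε₀, hsub⟩ :=
    mem_nhdsGT_iff_exists_Ioc_subset.1 (h.and (Ioo_mem_nhdsGT one_pos))
  exact ⟨ε₀, hε₀, (hsub ⟨hε₀, le_rfl⟩).2.2, fun ε h0 hε => (hsub ⟨h0, hε⟩).1⟩

theorem eventually_mem_Ioo_zero_one : ∀ᶠ ε in 𝓝[>] (0:ℝ), ε ∈ Ioo 0 1 :=
  Ioo_mem_nhdsGT one_pos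

theorem eventually_mul_le_one (C : ℝ) : ∀ᶠ ε in 𝓝[>] (0:ℝ), C * ε ≤ 1 :=
  (((continuous_const_mul C).tendsto' 0 0 (mul_zero C)).mono_left nhdsWithin_le_nhds).eventually
    (ge_mem_nhds one_pos)

section Nets

variable {E : Type*} [SeminormedAddGroup E]

theorem negligible_of_norm_le (C : ℝ) (K : ℕ) {x : ℝ → E}
    (h : ∀ m : ℕ, EvSmall fun ε => ‖x ε‖ ≤ C * ε ^ (-(K:ℝ)) * ε ^ (m:ℝ)) : Negligible x := by
  refine fun m => Filter.Eventually.evSmall ?_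
  filter_upwards [(h (m + K + 1)).eventually, eventually_mul_le_one C, eventually_mem_Ioo_zero_one]
    with ε hx hC ⟨h0, _⟩
  have hpow : ε ^ (-(K:ℝ)) * ε ^ (((m + K + 1 : ℕ)) : ℝ) = ε ^ (m:ℝ) * ε := by
    rw [← Real.rpow_add h0, ← Real.rpow_add_one h0.ne']
    push_cast
    ring_nf
  calc ‖x ε‖ ≤ C * ε * ε ^ (m:ℝ) := by rw [mul_assoc, hpow] at hx; linarith
    _ ≤ ε ^ (m:ℝ) := by nlinarith [Real.rpow_nonneg h0.le (m:ℝ)]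

theorem moderate_of_norm_le (C : ℝ) (K : ℕ) {x : ℝ → E}
    (h : EvSmall fun ε => ‖x ε‖ ≤ C * ε ^ (-(K:ℝ))) : Moderate x := by
  refine ⟨K + 1, Filter.Eventually.evSmall ?_⟩
  filter_upwards [h.eventually, eventually_mul_le_one C, eventually_mem_Ioo_zero_one]
    with ε hx hC ⟨h0, _⟩
  have hpow : ε ^ (-(K:ℝ)) = ε ^ (-((K + 1 : ℕ) : ℝ)) * ε := by
    rw [← Real.rpow_add_one h0.ne']
    push_cast
    ring_nf
  rw [hpow] at hx
  nlinarith [Real.rpow_nonneg h0.le (-((K + 1 : ℕ) : ℝ))]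

theorem Negligible.of_norm_le {F : Type*} [SeminormedAddGroup F] {y : ℝ → F}
    (hy : Negligible y) {z : ℝ → E} (h : ∀ ε, ‖z ε‖ ≤ ‖y ε‖) : Negligible z :=
  fun m => ((hy m).eventually.mono fun ε hε => (h ε).trans hε).evSmall

theorem Negligible.add {x y : ℝ → E} (hx : Negligible x) (hy : Negligible y) :
    Negligible fun ε => x ε + y ε := by
  refine negligible_of_norm_le 2 0 fun m => Filter.Eventually.evSmall ?_
  filter_upwards [(hx m).eventually, (hy m).eventually, eventually_mem_Ioo_zero_one]
    with ε hxε hyε ⟨h0, _⟩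
  calc ‖x ε + y ε‖ ≤ ‖x ε‖ + ‖y ε‖ := norm_add_le _ _
    _ ≤ 2 * ε ^ (-((0:ℕ):ℝ)) * ε ^ (m:ℝ) := by
      rw [Nat.cast_zero, neg_zero, Real.rpow_zero, mul_one]; linarith

theorem Moderate.of_negligible_sub {x z : ℝ → E} (hx : Moderate x)
    (hzx : Negligible fun ε => z ε - x ε) : Moderate z := by
  obtain ⟨N, hN⟩ := hx
  refine moderate_of_norm_le 2 N (Filter.Eventually.evSmall ?_)
  filter_upwards [hN.eventually, (hzx 0).eventually, eventually_mem_Ioo_zero_one]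
    with ε hxε hzε ⟨h0, h1⟩
  have hone : 1 ≤ ε ^ (-(N:ℝ)) := Real.one_le_rpow_of_pos_of_le_one_of_nonpos h0 h1.le (by simp)
  calc ‖z ε‖ ≤ ‖x ε‖ + ‖z ε - x ε‖ := norm_le_insert' _ _
    _ ≤ 2 * ε ^ (-(N:ℝ)) := by
      rw [Nat.cast_zero, Real.rpow_zero] at hzε; linarith

theorem IsReprOfPointOf.of_negligible_sub {A : Set (ℝ → E)} {x z : ℝ → E}
    (hx : IsReprOfPointOf A x) (hzx : Negligible fun ε => z ε - x ε) :
    IsReprOfPointOf A z := by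
  obtain ⟨hmod, a, ha, hxa⟩ := hx
  refine ⟨hmod.of_negligible_sub hzx, a, ha, ?_⟩
  simpa only [EqvNet, sub_add_sub_cancel] using hzx.add hxa

end Nets

section Uniform

variable {α E : Type*} [SeminormedAddGroup E]

def UniformlyModerateOn (F : ℝ → α → E) (S : Set α) : Prop :=
  ∃ N : ℕ, EvSmall fun ε => ∀ a ∈ S, ‖F ε a‖ ≤ ε ^ (-(N:ℝ))

def UniformlyNegligibleOn (F : ℝ → α → E) (S : Set α) : Prop :=
  ∀ m : ℕ, EvSmall fun ε => ∀ a ∈ S, ‖F ε a‖ ≤ ε ^ (m:ℝ)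

theorem eventually_forall_mem_of_forall_net {l : Filter ℝ} {S : Set α} {P : ℝ → α → Prop}
    (h : ∀ t : ℝ → α, (∀ ε, t ε ∈ S) → ∀ᶠ ε in l, P ε (t ε)) :
    ∀ᶠ ε in l, ∀ a ∈ S, P ε a := by
  classical
  rcases S.eq_empty_or_nonempty with rfl | ⟨a₀, ha₀⟩
  · simp
  let t : ℝ → α := fun ε => if hε : ∃ a ∈ S, ¬ P ε a then hε.choose else a₀
  have ht : ∀ ε, t ε ∈ S := fun ε => by
    by_cases hε : ∃ a ∈ S, ¬ P ε a
    · simpa only [t, dif_pos hε] using hε.choose_spec.1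
    · simpa only [t, dif_neg hε] using ha₀
  filter_upwards [h t ht] with ε hε a ha
  by_contra hna
  have hex : ∃ a ∈ S, ¬ P ε a := ⟨a, ha, hna⟩
  simp only [t, dif_pos hex] at hε
  exact hex.choose_spec.2 hε

theorem uniformlyNegligibleOn_of_forall_net {F : ℝ → α → E} {S : Set α}
    (h : ∀ t : ℝ → α, (∀ ε, t ε ∈ S) → Negligible fun ε => F ε (t ε)) :
    UniformlyNegligibleOn F S :=
  fun m => (eventually_forall_mem_of_forall_net fun t ht => (h t ht m).eventually).evSmall

theorem uniformlyModerateOn_of_forall_net {F : ℝ → α → E} {S : Set α}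
    (h : ∀ t : ℝ → α, (∀ ε, t ε ∈ S) → Moderate fun ε => F ε (t ε)) :
    UniformlyModerateOn F S := by
  classical
  rcases S.eq_empty_or_nonempty with rfl | ⟨a₀, ha₀⟩
  · exact ⟨0, (Eventually.of_forall fun _ => by simp).evSmall⟩
  by_contra hS
  let bad : ℕ → ℝ → Prop := fun k ε => ∃ a ∈ S, ε ^ (-(k:ℝ)) < ‖F ε a‖
  have hbad : ∀ k, ∃ᶠ ε in 𝓝[>] (0:ℝ), bad k ε := fun k => by
    have hk : ¬ ∀ᶠ ε in 𝓝[>] (0:ℝ), ∀ a ∈ S, ‖F ε a‖ ≤ ε ^ (-(k:ℝ)) :=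
      fun hk => hS ⟨k, hk.evSmall⟩
    exact (Filter.not_eventually.1 hk).mono fun ε hε => by
      simpa only [not_forall, not_le, exists_prop] using hε
  -- A diagonal net: at `ε`, a point violating the largest bound `ε ^ (-k)` with `k ≤ ε⁻¹`.
  let K : ℝ → ℕ := fun ε => Nat.findGreatest (bad · ε) ⌊ε⁻¹⌋₊
  let t : ℝ → α := fun ε => if hε : bad (K ε) ε then hε.choose else a₀
  have ht : ∀ ε, t ε ∈ S := fun ε => by
    by_cases hε : bad (K ε) ε
    · simpa only [t, dif_pos hε] using hε.choose_spec.1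
    · simpa only [t, dif_neg hε] using ha₀
  obtain ⟨N, hN⟩ := h t ht
  obtain ⟨ε, hbadε, hNε, hle, hε0, hε1⟩ : ∃ ε, bad N ε ∧ (N:ℝ) ≤ ε⁻¹ ∧
      ‖F ε (t ε)‖ ≤ ε ^ (-(N:ℝ)) ∧ ε ∈ Ioo 0 1 :=
    ((hbad N).and_eventually ((tendsto_inv_nhdsGT_zero.eventually (eventually_ge_atTop _)).and
      (hN.eventually.and eventually_mem_Ioo_zero_one))).exists
  have hNε' : N ≤ ⌊ε⁻¹⌋₊ := Nat.le_floor hNε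
  have hK : bad (K ε) ε := Nat.findGreatest_spec (P := (bad · ε)) hNε' hbadε
  have htε : ε ^ (-(K ε : ℝ)) < ‖F ε (t ε)‖ := by
    simp only [t, dif_pos hK]
    exact hK.choose_spec.2
  have hNK : ε ^ (-(N:ℝ)) ≤ ε ^ (-(K ε : ℝ)) :=
    Real.rpow_le_rpow_of_exponent_ge hε0 hε1.le
      (neg_le_neg (Nat.cast_le.2 (Nat.le_findGreatest (P := (bad · ε)) hNε' hbadε)))
  linarith

end Uniform

section GeneralizedFunctions

variable {V : Type*} [NormedAddCommGroup V] [NormedSpace ℝ V] {A : Set (ℝ → V)}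
  {u : ℝ → V → ℂ} {x : ℝ → V}

theorem EMod.moderate_apply (hu : EMod A u) (hx : IsReprOfPointOf A x) :
    Moderate fun ε => u ε (x ε) := by
  simpa only [Moderate, norm_iteratedFDeriv_zero] using hu.2 0 x hx

theorem EMod.moderate_fderiv (hu : EMod A u) (hx : IsReprOfPointOf A x) :
    Moderate fun ε => fderiv ℝ (u ε) (x ε) := by
  simpa only [Moderate, norm_iteratedFDeriv_one] using hu.2 1 x hx

theorem NNeg.negligible_apply (hu : NNeg A u) (hx : IsReprOfPointOf A x) :
    Negligible fun ε => u ε (x ε) := by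
  simpa only [Negligible, norm_iteratedFDeriv_zero] using hu.2 0 x hx

theorem EMod.negligible_sub_of_negligible_sub (hu : EMod A u) (hx : IsReprOfPointOf A x)
    {y : ℝ → V} (hyx : Negligible fun ε => y ε - x ε) :
    Negligible fun ε => u ε (y ε) - u ε (x ε) := by
  have hseg : UniformlyModerateOn (fun ε θ => fderiv ℝ (u ε) (x ε + θ • (y ε - x ε)))
      (Icc (0:ℝ) 1) := by
    refine uniformlyModerateOn_of_forall_net fun θ hθ => hu.moderate_fderiv
      (hx.of_negligible_sub (hyx.of_norm_le fun ε => ?_))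
    rw [add_sub_cancel_left, norm_smul, Real.norm_of_nonneg (hθ ε).1]
    exact mul_le_of_le_one_left (norm_nonneg _) (hθ ε).2
  obtain ⟨N, hN⟩ := hseg
  refine negligible_of_norm_le 1 N fun m => Filter.Eventually.evSmall ?_
  filter_upwards [hN.eventually, (hyx m).eventually, eventually_mem_Ioo_zero_one]
    with ε hder hyxε hε
  have hmvt := Convex.norm_image_sub_le_of_norm_fderiv_le
    (fun z _ => ((hu.1 ε hε.1 hε.2).differentiable (by simp)) z)
    (fun z hz => by
      rw [segment_eq_image'] at hz
      obtain ⟨θ, hθ, rfl⟩ := hz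
      exact hder θ hθ)
    (convex_segment (x ε) (y ε)) (left_mem_segment ℝ _ _) (right_mem_segment ℝ _ _)
  calc ‖u ε (y ε) - u ε (x ε)‖ ≤ ε ^ (-(N:ℝ)) * ‖y ε - x ε‖ := hmvt
    _ ≤ 1 * ε ^ (-(N:ℝ)) * ε ^ (m:ℝ) := by
      rw [one_mul]
      exact mul_le_mul_of_nonneg_left hyxε (Real.rpow_nonneg hε.1.le _)

end GeneralizedFunctions

section PiecewiseC1

theorem derivWithin_Icc_eqOn_deriv (g : ℝ → ℂ) (a b : ℝ) :
    EqOn (derivWithin g (Icc a b)) (deriv g) (Ioo a b) :=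
  fun _ ht => derivWithin_of_mem_nhds (Icc_mem_nhds ht.1 ht.2)

theorem ContDiffOn.intervalIntegrable_comp_deriv {g : ℝ → ℂ} {a b : ℝ} (hab : a ≤ b)
    (hg : ContDiffOn ℝ 1 g (Icc a b)) {F : ℝ → ℂ → ℂ}
    (hF : ContinuousOn (fun p : ℝ × ℂ => F p.1 p.2) (Icc a b ×ˢ univ)) :
    IntervalIntegrable (fun t => F t (deriv g t)) volume a b := by
  rcases hab.eq_or_lt with rfl | hlt
  · exact IntervalIntegrable.refl
  have hcont : ContinuousOn (fun t => F t (derivWithin g (Icc a b) t)) (Icc a b) :=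
    hF.comp (continuousOn_id.prodMk (hg.continuousOn_derivWithin (uniqueDiffOn_Icc hlt) le_rfl))
      fun t ht => ⟨ht, mem_univ _⟩
  refine (hcont.intervalIntegrable_of_Icc hab).congr_uIoo ?_
  rw [uIoo_of_le hab]
  exact fun t ht => by simp only [derivWithin_Icc_eqOn_deriv g a b ht]

namespace PwC1Path

variable (γ : PwC1Path)

theorem pt_mem_Icc (i : Fin (γ.n + 1)) : γ.pt i ∈ Icc (0:ℝ) 1 :=
  ⟨γ.first ▸ γ.mono (Fin.zero_le i), γ.last ▸ γ.mono (Fin.le_last i)⟩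

theorem Icc_pt_subset (i : Fin γ.n) : Icc (γ.pt i.castSucc) (γ.pt i.succ) ⊆ Icc 0 1 :=
  Icc_subset_Icc (γ.pt_mem_Icc _).1 (γ.pt_mem_Icc _).2

theorem pt_castSucc_le_succ (i : Fin γ.n) : γ.pt i.castSucc ≤ γ.pt i.succ :=
  γ.mono i.castSucc_lt_succ.le

def node (k : ℕ) : ℝ := γ.pt ⟨min k γ.n, Nat.lt_succ_of_le (min_le_right _ _)⟩

theorem node_zero : γ.node 0 = 0 := by
  simpa [node] using γ.first

theorem node_of_le {k : ℕ} (hk : γ.n ≤ k) : γ.node k = 1 :=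
  γ.last ▸ congrArg γ.pt (Fin.ext (min_eq_right hk))

theorem node_castSucc (i : Fin γ.n) : γ.node i = γ.pt i.castSucc :=
  congrArg γ.pt (Fin.ext (min_eq_left i.isLt.le))

theorem node_succ (i : Fin γ.n) : γ.node (i + 1) = γ.pt i.succ :=
  congrArg γ.pt (Fin.ext (min_eq_left i.isLt))

theorem intervalIntegrable_comp_deriv_node {F : ℝ → ℂ → ℂ}
    (hF : ContinuousOn (fun p : ℝ × ℂ => F p.1 p.2) (Icc 0 1 ×ˢ univ)) {k : ℕ} (hk : k < γ.n) :
    IntervalIntegrable (fun t => F t (deriv γ.toFun t)) volume (γ.node k) (γ.node (k + 1)) := by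
  rw [γ.node_castSucc ⟨k, hk⟩, γ.node_succ ⟨k, hk⟩]
  exact (γ.piece _).intervalIntegrable_comp_deriv (γ.pt_castSucc_le_succ _)
    (hF.mono (prod_mono (γ.Icc_pt_subset _) subset_rfl))

theorem intervalIntegrable_comp_deriv {F : ℝ → ℂ → ℂ}
    (hF : ContinuousOn (fun p : ℝ × ℂ => F p.1 p.2) (Icc 0 1 ×ˢ univ)) :
    IntervalIntegrable (fun t => F t (deriv γ.toFun t)) volume 0 1 := by
  simpa only [γ.node_zero, γ.node_of_le le_rfl] using
    IntervalIntegrable.trans_iterate (a := γ.node) (n := γ.n) fun _ hk =>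
      γ.intervalIntegrable_comp_deriv_node hF hk

theorem intervalIntegrable_mul_deriv {φ : ℝ → ℂ} (hφ : ContinuousOn φ (Icc 0 1)) :
    IntervalIntegrable (fun t => φ t * deriv γ.toFun t) volume 0 1 :=
  γ.intervalIntegrable_comp_deriv (F := fun t z => φ t * z)
    ((hφ.comp continuousOn_fst fun _ hp => hp.1).mul continuousOn_snd)

theorem integral_comp_deriv {F : ℝ → ℂ → ℂ}
    (hF : ContinuousOn (fun p : ℝ × ℂ => F p.1 p.2) (Icc 0 1 ×ˢ univ)) :
    ∫ t in (0:ℝ)..1, F t (deriv γ.toFun t) =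
      ∑ i : Fin γ.n, ∫ t in (γ.pt i.castSucc)..(γ.pt i.succ),
        F t (derivWithin γ.toFun (Icc (γ.pt i.castSucc) (γ.pt i.succ)) t) := by
  have hsum := intervalIntegral.sum_integral_adjacent_intervals (a := γ.node) (n := γ.n)
    fun k hk => γ.intervalIntegrable_comp_deriv_node hF hk
  rw [γ.node_zero, γ.node_of_le le_rfl, ← Fin.sum_univ_eq_sum_range] at hsum
  rw [← hsum]
  refine Finset.sum_congr rfl fun i _ => ?_
  rw [γ.node_castSucc, γ.node_succ]
  refine intervalIntegral.integral_congr_Ioo_of_le (γ.pt_castSucc_le_succ i) fun t ht => ?_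
  simp only [derivWithin_Icc_eqOn_deriv γ.toFun _ _ ht]

theorem pathIntegral_eq_integral {f : ℂ → ℂ} (hf : Continuous f) :
    pathIntegral γ f = ∫ t in (0:ℝ)..1, f (γ.toFun t) * deriv γ.toFun t :=
  (γ.integral_comp_deriv (F := fun t z => f (γ.toFun t) * z)
    (((hf.comp_continuousOn γ.cont).comp continuousOn_fst fun _ hp => hp.1).mul
      continuousOn_snd)).symm

theorem pathIntegral_sub {f g : ℂ → ℂ} (hf : Continuous f) (hg : Continuous g) :
    pathIntegral γ (fun z => f z - g z) = pathIntegral γ f - pathIntegral γ g := by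
  rw [γ.pathIntegral_eq_integral hf, γ.pathIntegral_eq_integral hg,
    γ.pathIntegral_eq_integral (f := fun z => f z - g z) (hf.sub hg),
    ← intervalIntegral.integral_sub
      (γ.intervalIntegrable_mul_deriv (φ := fun t => f (γ.toFun t)) (hf.comp_continuousOn γ.cont))
      (γ.intervalIntegrable_mul_deriv (φ := fun t => g (γ.toFun t)) (hg.comp_continuousOn γ.cont))]
  simp only [sub_mul]

theorem hasDerivAt_of_notMem_range {t : ℝ} (ht : t ∈ Ioo 0 1) (hnot : t ∉ range γ.pt) :
    HasDerivAt γ.toFun (deriv γ.toFun t) t := by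
  classical
  have hex : ∃ k, t < γ.node k := ⟨γ.n, by rw [γ.node_of_le le_rfl]; exact ht.2⟩
  obtain ⟨k, hk⟩ := Nat.exists_eq_add_one_of_ne_zero fun h0 =>
    (h0 ▸ Nat.find_spec hex : t < γ.node 0).not_ge (γ.node_zero ▸ ht.1.le)
  have hlt : t < γ.node (k + 1) := hk ▸ Nat.find_spec hex
  have hge : γ.node k ≤ t := not_lt.1 (Nat.find_min hex (hk ▸ k.lt_add_one))
  have hkn : k < γ.n := by
    by_contra hkn
    exact (γ.node_of_le (not_lt.1 hkn) ▸ hge).not_gt ht.2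
  let i : Fin γ.n := ⟨k, hkn⟩
  rw [γ.node_castSucc i] at hge
  rw [γ.node_succ i] at hlt
  have hmem : t ∈ Ioo (γ.pt i.castSucc) (γ.pt i.succ) :=
    ⟨hge.lt_of_ne fun h => hnot ⟨_, h⟩, hlt⟩
  have hnhds := Icc_mem_nhds hmem.1 hmem.2
  exact (((γ.piece i).differentiableOn one_ne_zero t (Ioo_subset_Icc_self hmem)).differentiableAt
    hnhds).hasDerivAt

end PwC1Path

end PiecewiseC1

section PathIntegralBounds

theorem norm_integral_le_of_ae_le {φ : ℝ → ℂ} {C : ℝ}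
    (h : ∀ᵐ t ∂volume.restrict (Icc (0:ℝ) 1), ‖φ t‖ ≤ C) : ‖∫ t in (0:ℝ)..1, φ t‖ ≤ C := by
  have h' : ∀ᵐ t, t ∈ uIoc (0:ℝ) 1 → ‖φ t‖ ≤ C := by
    rw [uIoc_of_le zero_le_one]
    exact ((ae_restrict_iff' measurableSet_Icc).1 h).mono fun t ht ht' =>
      ht (Ioc_subset_Icc_self ht')
  simpa using intervalIntegral.norm_integral_le_of_norm_le_const_ae h'

theorem norm_pathIntegral_le {γ : PwC1Path} {f : ℂ → ℂ} (hf : Continuous f) {B D : ℝ}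
    (hB : ∀ t ∈ Icc (0:ℝ) 1, ‖f (γ.toFun t)‖ ≤ B)
    (hD : ∀ᵐ t ∂volume.restrict (Icc (0:ℝ) 1), ‖deriv γ.toFun t‖ ≤ D) :
    ‖pathIntegral γ f‖ ≤ B * D := by
  rw [γ.pathIntegral_eq_integral hf]
  refine norm_integral_le_of_ae_le ((hD.and (ae_restrict_mem measurableSet_Icc)).mono ?_)
  rintro t ⟨hDt, ht⟩
  rw [norm_mul]
  exact mul_le_mul (hB t ht) hDt (norm_nonneg _) ((norm_nonneg _).trans (hB t ht))

/-- Integration by parts against `t ↦ f (γ₂ t) * (γ₁ t - γ₂ t)`. -/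
theorem pathIntegral_sub_pathIntegral {f : ℂ → ℂ} (hf : ContDiff ℝ 1 f) (γ₁ γ₂ : PwC1Path) :
    pathIntegral γ₁ f - pathIntegral γ₂ f =
      (∫ t in (0:ℝ)..1, (f (γ₁.toFun t) - f (γ₂.toFun t)) * deriv γ₁.toFun t)
      + (f (γ₂.toFun 1) * (γ₁.toFun 1 - γ₂.toFun 1) - f (γ₂.toFun 0) * (γ₁.toFun 0 - γ₂.toFun 0))
      - ∫ t in (0:ℝ)..1, fderiv ℝ f (γ₂.toFun t) (deriv γ₂.toFun t)
          * (γ₁.toFun t - γ₂.toFun t) := by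
  have hfγ₁ : ContinuousOn (fun t => f (γ₁.toFun t)) (Icc 0 1) :=
    hf.continuous.comp_continuousOn γ₁.cont
  have hfγ₂ : ContinuousOn (fun t => f (γ₂.toFun t)) (Icc 0 1) :=
    hf.continuous.comp_continuousOn γ₂.cont
  have hI₁ := γ₁.intervalIntegrable_mul_deriv
    (φ := fun t => f (γ₁.toFun t) - f (γ₂.toFun t)) (hfγ₁.sub hfγ₂)
  have hI₂ := γ₁.intervalIntegrable_mul_deriv hfγ₂
  have hI₃ := γ₂.intervalIntegrable_mul_deriv hfγ₂
  have hI₄ := γ₂.intervalIntegrable_comp_deriv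
    (F := fun t z => fderiv ℝ f (γ₂.toFun t) z * (γ₁.toFun t - γ₂.toFun t))
    ((((hf.continuous_fderiv one_ne_zero).comp_continuousOn γ₂.cont).comp continuousOn_fst
      fun _ hp => hp.1).clm_apply continuousOn_snd |>.mul
      ((γ₁.cont.sub γ₂.cont).comp continuousOn_fst fun _ hp => hp.1))
  have hderiv : ∀ t ∈ Ioo (0:ℝ) 1 \ (range γ₁.pt ∪ range γ₂.pt),
      HasDerivAt (fun t => f (γ₂.toFun t) * (γ₁.toFun t - γ₂.toFun t))
        (fderiv ℝ f (γ₂.toFun t) (deriv γ₂.toFun t) * (γ₁.toFun t - γ₂.toFun t)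
          + (f (γ₂.toFun t) * deriv γ₁.toFun t - f (γ₂.toFun t) * deriv γ₂.toFun t)) t := by
    rintro t ⟨ht, hnot⟩
    have hγ₁ := γ₁.hasDerivAt_of_notMem_range ht fun h => hnot (Or.inl h)
    have hγ₂ := γ₂.hasDerivAt_of_notMem_range ht fun h => hnot (Or.inr h)
    have hfγ : HasDerivAt (fun s => f (γ₂.toFun s))
        (fderiv ℝ f (γ₂.toFun t) (deriv γ₂.toFun t)) t :=
      (hf.differentiable one_ne_zero (γ₂.toFun t)).hasFDerivAt.comp_hasDerivAt t hγ₂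
    exact (hfγ.mul (hγ₁.sub hγ₂)).congr_deriv (by rw [Pi.sub_apply]; ring)
  have hparts := integral_eq_of_hasDerivAt_off_countable_of_le
    (fun t => f (γ₂.toFun t) * (γ₁.toFun t - γ₂.toFun t)) _ zero_le_one
    ((finite_range _).union (finite_range _)).countable
    (hfγ₂.mul (γ₁.cont.sub γ₂.cont)) hderiv (hI₄.add (hI₂.sub hI₃))
  rw [intervalIntegral.integral_add hI₄ (hI₂.sub hI₃), intervalIntegral.integral_sub hI₂ hI₃]
    at hparts
  have hsplit : ∫ t in (0:ℝ)..1, f (γ₁.toFun t) * deriv γ₁.toFun t =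
      (∫ t in (0:ℝ)..1, (f (γ₁.toFun t) - f (γ₂.toFun t)) * deriv γ₁.toFun t)
      + ∫ t in (0:ℝ)..1, f (γ₂.toFun t) * deriv γ₁.toFun t := by
    rw [← intervalIntegral.integral_add hI₁ hI₂]
    simp only [sub_mul, sub_add_cancel]
  rw [γ₁.pathIntegral_eq_integral hf.continuous, γ₂.pathIntegral_eq_integral hf.continuous,
    hsplit]
  linear_combination hparts

theorem norm_pathIntegral_sub_pathIntegral_le {f : ℂ → ℂ} (hf : ContDiff ℝ 1 f)
    {γ₁ γ₂ : PwC1Path} {a δ b c d₁ d₂ : ℝ}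
    (ha : ∀ t ∈ Icc (0:ℝ) 1, ‖f (γ₁.toFun t) - f (γ₂.toFun t)‖ ≤ a)
    (hδ : ∀ t ∈ Icc (0:ℝ) 1, ‖γ₁.toFun t - γ₂.toFun t‖ ≤ δ)
    (hb : ∀ t ∈ Icc (0:ℝ) 1, ‖f (γ₂.toFun t)‖ ≤ b)
    (hc : ∀ t ∈ Icc (0:ℝ) 1, ‖fderiv ℝ f (γ₂.toFun t)‖ ≤ c)
    (hd₁ : ∀ᵐ t ∂volume.restrict (Icc (0:ℝ) 1), ‖deriv γ₁.toFun t‖ ≤ d₁)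
    (hd₂ : ∀ᵐ t ∂volume.restrict (Icc (0:ℝ) 1), ‖deriv γ₂.toFun t‖ ≤ d₂) :
    ‖pathIntegral γ₁ f - pathIntegral γ₂ f‖ ≤ a * d₁ + 2 * (b * δ) + c * d₂ * δ := by
  have h0 : (0:ℝ) ∈ Icc (0:ℝ) 1 := left_mem_Icc.2 zero_le_one
  have h1 : (1:ℝ) ∈ Icc (0:ℝ) 1 := right_mem_Icc.2 zero_le_one
  have hb₀ : 0 ≤ b := (norm_nonneg _).trans (hb 0 h0)
  have hc₀ : 0 ≤ c := (norm_nonneg _).trans (hc 0 h0)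
  have hbδ : ∀ t ∈ Icc (0:ℝ) 1, ‖f (γ₂.toFun t) * (γ₁.toFun t - γ₂.toFun t)‖ ≤ b * δ :=
    fun t ht => (norm_mul_le _ _).trans (mul_le_mul (hb t ht) (hδ t ht) (norm_nonneg _) hb₀)
  have hfirst : ‖∫ t in (0:ℝ)..1, (f (γ₁.toFun t) - f (γ₂.toFun t)) * deriv γ₁.toFun t‖
      ≤ a * d₁ := by
    refine norm_integral_le_of_ae_le ((hd₁.and (ae_restrict_mem measurableSet_Icc)).mono ?_)
    rintro t ⟨hdt, ht⟩
    exact (norm_mul_le _ _).trans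
      (mul_le_mul (ha t ht) hdt (norm_nonneg _) ((norm_nonneg _).trans (ha t ht)))
  have hthird : ‖∫ t in (0:ℝ)..1, fderiv ℝ f (γ₂.toFun t) (deriv γ₂.toFun t)
      * (γ₁.toFun t - γ₂.toFun t)‖ ≤ c * d₂ * δ := by
    refine norm_integral_le_of_ae_le ((hd₂.and (ae_restrict_mem measurableSet_Icc)).mono ?_)
    rintro t ⟨hdt, ht⟩
    calc ‖fderiv ℝ f (γ₂.toFun t) (deriv γ₂.toFun t) * (γ₁.toFun t - γ₂.toFun t)‖
        ≤ ‖fderiv ℝ f (γ₂.toFun t)‖ * ‖deriv γ₂.toFun t‖ * ‖γ₁.toFun t - γ₂.toFun t‖ :=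
          (norm_mul_le _ _).trans (mul_le_mul_of_nonneg_right
            (ContinuousLinearMap.le_opNorm _ _) (norm_nonneg _))
      _ ≤ c * d₂ * δ :=
          mul_le_mul (mul_le_mul (hc t ht) hdt (norm_nonneg _) hc₀) (hδ t ht) (norm_nonneg _)
            ((mul_nonneg hc₀ (norm_nonneg _)).trans (mul_le_mul_of_nonneg_left hdt hc₀))
  rw [pathIntegral_sub_pathIntegral hf]
  set I₁ := ∫ t in (0:ℝ)..1, (f (γ₁.toFun t) - f (γ₂.toFun t)) * deriv γ₁.toFun t
  set I₃ := ∫ t in (0:ℝ)..1, fderiv ℝ f (γ₂.toFun t) (deriv γ₂.toFun t)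
    * (γ₁.toFun t - γ₂.toFun t)
  set P₁ := f (γ₂.toFun 1) * (γ₁.toFun 1 - γ₂.toFun 1)
  set P₀ := f (γ₂.toFun 0) * (γ₁.toFun 0 - γ₂.toFun 0)
  linarith [norm_sub_le (I₁ + (P₁ - P₀)) I₃, norm_add_le I₁ (P₁ - P₀), norm_sub_le P₁ P₀,
    hbδ 0 h0, hbδ 1 h1]

end PathIntegralBounds

section GeneralizedPathIntegral

variable {A : Set (ℝ → ℂ)} {u : ℝ → ℂ → ℂ} {γ γ' : ℝ → PwC1Path}

theorem PathEqv.negligible_sub_apply (h : PathEqv γ γ') {t : ℝ → ℝ}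
    (ht : ∀ ε, t ε ∈ Icc (0:ℝ) 1) :
    Negligible fun ε => (γ ε).toFun (t ε) - (γ' ε).toFun (t ε) :=
  fun m => ((h m).eventually.mono fun ε hε => hε.1 (t ε) (ht ε)).evSmall

theorem moderate_pathIntegral (hu : EMod A u) (hγ : PathIn A γ) :
    Moderate fun ε => pathIntegral (γ ε) (u ε) := by
  obtain ⟨Nu, hNu⟩ : UniformlyModerateOn (fun ε t => u ε ((γ ε).toFun t)) (Icc 0 1) :=
    uniformlyModerateOn_of_forall_net fun t ht => hu.moderate_apply (hγ.2 t ht)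
  obtain ⟨Nd, hNd⟩ := hγ.1.2
  refine moderate_of_norm_le 1 (Nu + Nd) (Filter.Eventually.evSmall ?_)
  filter_upwards [hNu.eventually, hNd.eventually, eventually_mem_Ioo_zero_one]
    with ε huε hdε ⟨h0, h1⟩
  calc ‖pathIntegral (γ ε) (u ε)‖ ≤ ε ^ (-(Nu:ℝ)) * ε ^ (-(Nd:ℝ)) :=
        norm_pathIntegral_le (hu.1 ε h0 h1).continuous huε hdε
    _ = 1 * ε ^ (-((Nu + Nd : ℕ) : ℝ)) := by
        rw [one_mul, ← Real.rpow_add h0]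
        push_cast
        ring_nf

theorem negligible_pathIntegral_sub_of_gEq {v : ℝ → ℂ → ℂ} (hu : SmoothNet u)
    (hv : SmoothNet v) (huv : GEq A u v) (hγ : PathIn A γ) :
    Negligible fun ε => pathIntegral (γ ε) (u ε) - pathIntegral (γ ε) (v ε) := by
  have hw : UniformlyNegligibleOn (fun ε t => u ε ((γ ε).toFun t) - v ε ((γ ε).toFun t))
      (Icc 0 1) :=
    uniformlyNegligibleOn_of_forall_net fun t ht => huv.negligible_apply (hγ.2 t ht)
  obtain ⟨Nd, hNd⟩ := hγ.1.2
  refine negligible_of_norm_le 1 Nd fun m => Filter.Eventually.evSmall ?_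
  filter_upwards [(hw m).eventually, hNd.eventually, eventually_mem_Ioo_zero_one]
    with ε hwε hdε ⟨h0, h1⟩
  have huε := (hu ε h0 h1).continuous
  have hvε := (hv ε h0 h1).continuous
  rw [← (γ ε).pathIntegral_sub huε hvε, one_mul, mul_comm]
  exact norm_pathIntegral_le (huε.sub hvε) hwε hdε

theorem negligible_pathIntegral_sub_of_negligible_sub (hu : EMod A u) (hγ : PathIn A γ)
    (hγ' : PathIn A γ')
    (hval : ∀ t : ℝ → ℝ, (∀ ε, t ε ∈ Icc (0:ℝ) 1) →
      Negligible fun ε => (γ ε).toFun (t ε) - (γ' ε).toFun (t ε)) :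
    Negligible fun ε => pathIntegral (γ ε) (u ε) - pathIntegral (γ' ε) (u ε) := by
  have hδ : UniformlyNegligibleOn (fun ε t => (γ ε).toFun t - (γ' ε).toFun t) (Icc 0 1) :=
    uniformlyNegligibleOn_of_forall_net hval
  have ha : UniformlyNegligibleOn
      (fun ε t => u ε ((γ ε).toFun t) - u ε ((γ' ε).toFun t)) (Icc 0 1) :=
    uniformlyNegligibleOn_of_forall_net fun t ht =>
      hu.negligible_sub_of_negligible_sub (hγ'.2 t ht) (hval t ht)
  obtain ⟨Nb, hb⟩ : UniformlyModerateOn (fun ε t => u ε ((γ' ε).toFun t)) (Icc 0 1) :=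
    uniformlyModerateOn_of_forall_net fun t ht => hu.moderate_apply (hγ'.2 t ht)
  obtain ⟨Nc, hc⟩ : UniformlyModerateOn (fun ε t => fderiv ℝ (u ε) ((γ' ε).toFun t))
      (Icc 0 1) :=
    uniformlyModerateOn_of_forall_net fun t ht => hu.moderate_fderiv (hγ'.2 t ht)
  obtain ⟨N₁, hd₁⟩ := hγ.1.2
  obtain ⟨N₂, hd₂⟩ := hγ'.1.2
  set K := Nb + Nc + N₁ + N₂
  refine negligible_of_norm_le 4 (2 * K) fun m => Filter.Eventually.evSmall ?_
  filter_upwards [(ha m).eventually, (hδ m).eventually, hb.eventually, hc.eventually,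
    hd₁.eventually, hd₂.eventually, eventually_mem_Ioo_zero_one]
    with ε haε hδε hbε hcε hd₁ε hd₂ε ⟨h0, h1⟩
  set X := ε ^ (-(K:ℝ))
  set Y := ε ^ (m:ℝ)
  have hX : ∀ N ≤ K, ε ^ (-(N:ℝ)) ≤ X := fun N hN =>
    Real.rpow_le_rpow_of_exponent_ge h0 h1.le (neg_le_neg (Nat.cast_le.2 hN))
  have hX₁ : 1 ≤ X := Real.one_le_rpow_of_pos_of_le_one_of_nonpos h0 h1.le (by simp)
  have hdiff := norm_pathIntegral_sub_pathIntegral_le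
    ((hu.1 ε h0 h1).of_le (by exact_mod_cast le_top)) haε hδε
    (fun t ht => (hbε t ht).trans (hX Nb (by omega)))
    (fun t ht => (hcε t ht).trans (hX Nc (by omega)))
    (hd₁ε.mono fun t ht => ht.trans (hX N₁ (by omega)))
    (hd₂ε.mono fun t ht => ht.trans (hX N₂ (by omega)))
  calc _ ≤ Y * X + 2 * (X * Y) + X * X * Y := hdiff
    _ ≤ 4 * (X * X) * Y := by nlinarith [mul_le_mul_of_nonneg_right hX₁ (by positivity : 0 ≤ X * Y)]
    _ = 4 * ε ^ (-((2 * K : ℕ) : ℝ)) * Y := by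
        rw [← Real.rpow_add h0]
        push_cast
        ring_nf

end GeneralizedPathIntegral

/-- Proposition 4.5: the integral over a generalized path is well-defined. -/
theorem pathIntegral_well_defined (A : Set (ℝ → ℂ))
    (u : ℝ → ℂ → ℂ) (hu : EMod A u)
    (γ : ℝ → PwC1Path) (hγ : PathIn A γ) :
    -- the net of integrals is moderate
    (Moderate fun ε => pathIntegral (γ ε) (u ε)) ∧
    -- independence of the representative of u
    (∀ v : ℝ → ℂ → ℂ, EMod A v → GEq A u v →
      Negligible fun ε => pathIntegral (γ ε) (u ε) - pathIntegral (γ ε) (v ε)) ∧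
    -- independence of the representative of γ
    (∀ γ' : ℝ → PwC1Path, PathIn A γ' → PathEqv γ γ' →
      Negligible fun ε => pathIntegral (γ ε) (u ε) - pathIntegral (γ' ε) (u ε)) ∧
    -- moreover: paths in A with the same point values give the same integral
    (∀ γ' : ℝ → PwC1Path, PathIn A γ' →
      (∀ t : ℝ → ℝ, (∀ ε, t ε ∈ Set.Icc (0:ℝ) 1) →
        Negligible fun ε => (γ ε).toFun (t ε) - (γ' ε).toFun (t ε)) →
      Negligible fun ε => pathIntegral (γ ε) (u ε) - pathIntegral (γ' ε) (u ε)) :=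
  ⟨moderate_pathIntegral hu hγ,
    fun _ hv huv => negligible_pathIntegral_sub_of_gEq hu.1 hv.1 huv hγ,
    fun _ hγ' hγγ' => negligible_pathIntegral_sub_of_negligible_sub hu hγ hγ'
      fun _ ht => hγγ'.negligible_sub_apply ht,
    fun _ hγ' hval => negligible_pathIntegral_sub_of_negligible_sub hu hγ hγ' hval⟩
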